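/- arXiv:2510.23647 — 11 statements merged into one kernel-verified Lean document; each statement's English description precedes it below -/
import Mathlib

section
/- For every coherent condition φ and every L-structure A, a congruence θ on A lies in Spec^φ(A) if and only if A/θ embeds into some member of the fundamental class F(φ); that is, Φ(F(φ)) = φ. Conversely, for every class K of L-structures, an L-structure A lies in F(Φ(K)) if and only if A embeds into some member of K; that is, F(Φ(K)) = IS(K). -/
open FirstOrder FirstOrder.Language Topology

universe u v w x y

/-- A congruence on an `L`-structure `A`, viewed as a set of pairs: an equivalence
relation respected by the interpretation of every function symbol. -/
def IsCong (L : FirstOrder.Language.{v, w}) (A : Type*) [L.Structure A]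
    (θ : Set (A × A)) : Prop :=
  (∀ a : A, (a, a) ∈ θ) ∧
  (∀ a b : A, (a, b) ∈ θ → (b, a) ∈ θ) ∧
  (∀ a b c : A, (a, b) ∈ θ → (b, c) ∈ θ → (a, c) ∈ θ) ∧
  ∀ (n : ℕ) (f : L.Functions n) (y z : Fin n → A),
    (∀ i, (y i, z i) ∈ θ) →
      (Structure.funMap f y, Structure.funMap f z) ∈ θ

/-- The setoid associated to a congruence. -/
def congSetoid {L : FirstOrder.Language.{v, w}} {A : Type*} [L.Structure A]
    (θ : Set (A × A)) (hθ : IsCong L A θ) : Setoid A :=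
  ⟨fun a b => (a, b) ∈ θ,
    ⟨fun a => hθ.1 a, fun h => hθ.2.1 _ _ h, fun h h' => hθ.2.2.1 _ _ _ h h'⟩⟩

/-- The natural `L`-structure on the quotient `A/θ` of `A` by a congruence `θ`. -/
noncomputable instance congQuotStructure {L : FirstOrder.Language.{v, w}} [L.IsAlgebraic]
    {A : Type*} [L.Structure A] {θ : Set (A × A)} {hθ : IsCong L A θ} :
    L.Structure (Quotient (congSetoid θ hθ)) where
  funMap {_} f q := Quotient.mk (congSetoid θ hθ)
    (Structure.funMap f fun i => (q i).out)
  RelMap {_} r _ := isEmptyElim r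

/-- The kernel of a map, as a set of pairs. -/
def mapKer {A : Type*} {B : Type*} (h : A → B) : Set (A × A) :=
  {p : A × A | h p.1 = h p.2}

/-- The preimage of a set of pairs under a map. -/
def pairPreimage {A : Type*} {B : Type*} (h : A → B) (θ : Set (B × B)) : Set (A × A) :=
  {p : A × A | (h p.1, h p.2) ∈ θ}

/-- The pushforward `ψ/θ = {(a/θ, a'/θ) : (a, a') ∈ ψ}` of a set of pairs to the
quotient by the congruence `θ`. -/
def quotPush {L : FirstOrder.Language.{v, w}} {A : Type*} [L.Structure A]
    (θ : Set (A × A)) (hθ : IsCong L A θ) (ψ : Set (A × A)) :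
    Set (Quotient (congSetoid θ hθ) × Quotient (congSetoid θ hθ)) :=
  {p | ∃ a a' : A, Quotient.mk (congSetoid θ hθ) a = p.1 ∧
        Quotient.mk (congSetoid θ hθ) a' = p.2 ∧ (a, a') ∈ ψ}

/-- The `K`-spectrum of `A`: the set of kernels of homomorphisms from `A` into
members of the class `K` (equivalently, the set of congruences `θ` on `A` such that
`A/θ` embeds into a member of `K`). -/
def SpecK {L : FirstOrder.Language.{v, w}} (K : ∀ B : Type u, L.Structure B → Prop)
    (A : Type*) [L.Structure A] : Set (Set (A × A)) :=
  {θ | ∃ (B : Type u) (iB : L.Structure B), K B iB ∧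
        ∃ h : @Language.Hom L A B _ iB, θ = mapKer h.toFun}

/-- The diagonal congruence on `A`. -/
def diagCong (A : Type*) : Set (A × A) := {p : A × A | p.1 = p.2}

/-- `A` is `K`-reduced: the intersection of all congruences in `Spec_K A` is the diagonal. -/
def IsKReduced {L : FirstOrder.Language.{v, w}} (K : ∀ B : Type u, L.Structure B → Prop)
    (A : Type*) [L.Structure A] : Prop :=
  ⋂₀ SpecK K A = diagCong A

/-- A `K`-radical congruence: an intersection of a (possibly empty) family of members
of `Spec_K A` (the empty intersection being `A × A`). -/
def IsKRadical {L : FirstOrder.Language.{v, w}} (K : ∀ B : Type u, L.Structure B → Prop)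
    (A : Type*) [L.Structure A] (θ : Set (A × A)) : Prop :=
  ∃ F : Set (Set (A × A)), F ⊆ SpecK K A ∧ θ = ⋂₀ F

/-- The Zariski closed subset of the `K`-spectrum determined by `S ⊆ A × A`. -/
def VClosed {L : FirstOrder.Language.{v, w}} (K : ∀ B : Type u, L.Structure B → Prop)
    (A : Type*) [L.Structure A] (S : Set (A × A)) : Set (Set (A × A)) :=
  {θ ∈ SpecK K A | S ⊆ θ}

/-- The `K`-radical of a set of pairs `S`. -/
def radK {L : FirstOrder.Language.{v, w}} (K : ∀ B : Type u, L.Structure B → Prop)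
    (A : Type*) [L.Structure A] (S : Set (A × A)) : Set (A × A) :=
  ⋂₀ VClosed K A S

/-- The Zariski closed subset of the `K`-spectrum (as a subtype) determined by `S`. -/
def VZar {L : FirstOrder.Language.{v, w}} (K : ∀ B : Type u, L.Structure B → Prop)
    (A : Type*) [L.Structure A] (S : Set (A × A)) : Set {θ // θ ∈ SpecK K A} :=
  {θ | S ⊆ (θ : Set (A × A))}

/-- The Zariski topology on the `K`-spectrum of `A`: the closed sets are the arbitrary
intersections of finite unions of Zariski closed sets `VZar K A S`. -/
def zariskiTopology {L : FirstOrder.Language.{v, w}} (K : ∀ B : Type u, L.Structure B → Prop)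
    (A : Type*) [L.Structure A] : TopologicalSpace {θ // θ ∈ SpecK K A} :=
  TopologicalSpace.generateFrom {U | ∃ S : Set (A × A), U = (VZar K A S)ᶜ}

/-- A product structure on a dependent function type. -/
instance piStructure {L : FirstOrder.Language.{v, w}} [L.IsAlgebraic]
    {ι : Type*} {B : ι → Type*} [∀ i, L.Structure (B i)] :
    L.Structure (∀ i, B i) where
  funMap {_} f q i := Structure.funMap f fun j => q j i
  RelMap {_} r _ := isEmptyElim r

/-- `A` embeds into a direct product of a (possibly empty) family of members of `K`. -/
def EmbedsInProduct {L : FirstOrder.Language.{v, w}} [L.IsAlgebraic]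
    (K : ∀ B : Type u, L.Structure B → Prop) (A : Type*) [L.Structure A] : Prop :=
  ∃ (ι : Type u) (B : ι → Type u) (iB : ∀ i, L.Structure (B i)),
    (∀ i, K (B i) (iB i)) ∧
      Nonempty (@Language.Embedding L A (∀ i, B i) _ (@piStructure L _ ι B iB))

/-- The term-algebra structure on `L.Term α`. -/
instance termStructure {L : FirstOrder.Language.{v, w}} [L.IsAlgebraic] {α : Type x} :
    L.Structure (L.Term α) where
  funMap {_} f q := Term.func f q
  RelMap {_} r _ := isEmptyElim r

/-- Evaluation of a term at an assignment `a : X → A`, for an explicitly given structure. -/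
def evalAt {L : FirstOrder.Language.{v, w}} {A : Type*} (iA : L.Structure A)
    {X : Type x} (a : X → A) : L.Term X → A :=
  letI := iA; fun t => Term.realize a t

/-- An equation (pair of terms) holds at an assignment `a`. -/
def EqHolds {L : FirstOrder.Language.{v, w}} {A : Type*} (iA : L.Structure A)
    {X : Type x} (a : X → A) (pq : L.Term X × L.Term X) : Prop :=
  evalAt iA a pq.1 = evalAt iA a pq.2

/-- `K` is equationally Noetherian. -/
def EqNoetherian {L : FirstOrder.Language.{v, w}}
    (K : ∀ B : Type u, L.Structure B → Prop) : Prop :=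
  ∀ (n : ℕ) (T : Set (L.Term (Fin n) × L.Term (Fin n))),
    ∃ T₀ ⊆ T, T₀.Finite ∧
      ∀ (A : Type u) (iA : L.Structure A), K A iA → ∀ a : Fin n → A,
        (∀ pq ∈ T₀, EqHolds iA a pq) → ∀ pq ∈ T, EqHolds iA a pq

/-- `A` is discriminated by `K`: every finite subset is separated injectively by a
homomorphism into a member of `K`. -/
def DiscriminatedBy {L : FirstOrder.Language.{v, w}}
    (K : ∀ B : Type u, L.Structure B → Prop) (A : Type*) [iA : L.Structure A] : Prop :=
  ∀ W : Set A, W.Finite → ∃ (B : Type u) (iB : L.Structure B), K B iB ∧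
    ∃ h : @Language.Hom L A B _ iB, Set.InjOn h.toFun W

/-- `A` is `n`-separated by `K` for every `n`. -/
def NSeparatedBy {L : FirstOrder.Language.{v, w}}
    (K : ∀ B : Type u, L.Structure B → Prop) (A : Type*) [iA : L.Structure A] : Prop :=
  ∀ (n : ℕ) (a b : Fin n → A), (∀ i, a i ≠ b i) →
    ∃ (B : Type u) (iB : L.Structure B), K B iB ∧
      ∃ h : @Language.Hom L A B _ iB, ∀ i, h.toFun (a i) ≠ h.toFun (b i)

/-- Any member of the `K`-spectrum is a congruence. -/
theorem isCong_of_mem_specK {L : FirstOrder.Language.{v, w}}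
    {K : ∀ B : Type u, L.Structure B → Prop} {A : Type*} [L.Structure A]
    {θ : Set (A × A)} (hθ : θ ∈ SpecK K A) : IsCong L A θ := by
  obtain ⟨B, iB, -, h, rfl⟩ := hθ
  refine ⟨fun a => rfl, fun a b hab => hab.symm, fun a b c hab hbc => hab.trans hbc,
    fun n f y z hyz => ?_⟩
  show h.toFun _ = h.toFun _
  have hy := @Language.Hom.map_fun' L A B _ iB h n f y
  have hz := @Language.Hom.map_fun' L A B _ iB h n f z
  rw [hy, hz]
  exact congrArg _ (funext fun i => hyz i)

/-- An arbitrary intersection of congruences is a congruence. -/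
theorem isCong_sInter {L : FirstOrder.Language.{v, w}} {A : Type*} [L.Structure A]
    {X : Set (Set (A × A))} (hX : ∀ θ ∈ X, IsCong L A θ) : IsCong L A (⋂₀ X) :=
  ⟨fun a θ hθ => (hX θ hθ).1 a,
   fun a b hab θ hθ => (hX θ hθ).2.1 a b (hab θ hθ),
   fun a b c hab hbc θ hθ => (hX θ hθ).2.2.1 a b c (hab θ hθ) (hbc θ hθ),
   fun n f y z hyz θ hθ => (hX θ hθ).2.2.2 n f y z (fun i => hyz i θ hθ)⟩


/-- A coherent condition on the class of all `L`-structures in `Type u₁`: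
an assignment of a set of congruences to every structure, satisfying the two
coherence properties. -/
structure CoherentCondition.{u1, v1, w1} (L : FirstOrder.Language.{v1, w1})
    [L.IsAlgebraic] where
  spec : ∀ (A : Type u1) [L.Structure A], Set (Set (A × A))
  isCong : ∀ (A : Type u1) [L.Structure A], ∀ θ ∈ spec A, IsCong L A θ
  preimage_mem : ∀ (A B : Type u1) [L.Structure A] [L.Structure B] (h : A →[L] B),
      ∀ θ ∈ spec B, pairPreimage h.toFun θ ∈ spec A
  quotPush_mem : ∀ (A : Type u1) [L.Structure A] (θ ψ : Set (A × A)) (hθ : IsCong L A θ),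
      ψ ∈ spec A → θ ⊆ ψ → quotPush θ hθ ψ ∈ spec (Quotient (congSetoid θ hθ))

/-- `Φ(K)`: the congruences `θ` on `A` such that `A/θ` embeds into a member of `K`. -/
def PhiSpec {L : FirstOrder.Language.{v, w}} [L.IsAlgebraic]
    (K : ∀ B : Type u, L.Structure B → Prop) (A : Type u) [L.Structure A] :
    Set (Set (A × A)) :=
  {θ | ∃ hθ : IsCong L A θ, ∃ (B : Type u) (iB : L.Structure B), K B iB ∧
        Nonempty (@Language.Embedding L (Quotient (congSetoid θ hθ)) B _ iB)}

/-- The fundamental class of a coherent condition: the structures whose diagonal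
congruence is distinguished. -/
def FundClass {L : FirstOrder.Language.{v, w}} [L.IsAlgebraic]
    (φ : CoherentCondition.{u} L) : ∀ B : Type u, L.Structure B → Prop :=
  fun B iB => diagCong B ∈ @CoherentCondition.spec L _ φ B iB

section Aux

variable {L : FirstOrder.Language.{v, w}} [L.IsAlgebraic] {A : Type u} [L.Structure A]

omit [L.IsAlgebraic] in
theorem diag_isCong : IsCong L A (diagCong A) := by
  refine ⟨fun a => rfl, fun a b h => h.symm, fun a b c h h' => h.trans h', ?_⟩
  intro n f y z h
  exact congrArg _ (funext fun i => h i)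

/-- The quotient projection as a homomorphism. -/
noncomputable def quotHom (θ : Set (A × A)) (hθ : IsCong L A θ) :
    A →[L] Quotient (congSetoid θ hθ) where
  toFun := Quotient.mk (congSetoid θ hθ)
  map_fun' := by
    intro n f y
    show Quotient.mk _ _ = Quotient.mk _ (Structure.funMap f fun i =>
      (Quotient.mk (congSetoid θ hθ) (y i)).out)
    refine Quotient.sound (hθ.2.2.2 n f _ _ fun i => ?_)
    exact hθ.2.1 _ _ (Quotient.exact ((Quotient.mk (congSetoid θ hθ) (y i)).out_eq))
  map_rel' := fun r _ => isEmptyElim r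

theorem diag_mk_injective :
    Function.Injective (Quotient.mk (congSetoid (diagCong A) (diag_isCong (L := L)))) :=
  fun _ _ h => Quotient.exact h

/-- `A` embeds in its quotient by the diagonal congruence. -/
noncomputable def diagEmb : A ↪[L] Quotient (congSetoid (diagCong A) (diag_isCong (L := L))) :=
  Language.Embedding.ofInjective (f := quotHom (diagCong A) diag_isCong) diag_mk_injective

/-- The quotient of `A` by the diagonal congruence embeds in `A`. -/
noncomputable def diagEmbInv : (Quotient (congSetoid (diagCong A) (diag_isCong (L := L)))) ↪[L] A where
  toFun := Quotient.out
  inj' := fun x y h => by rw [← x.out_eq, ← y.out_eq, h]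
  map_fun' := by
    intro n f q
    show Quotient.out (Quotient.mk _ _) = _
    exact diag_mk_injective (Quotient.out_eq _)
  map_rel' := fun r _ => isEmptyElim r

end Aux

/-- `Φ(F(φ)) = φ` for every coherent condition `φ`, and
`F(Φ(K)) = IS(K)` for every class `K`. -/
theorem statement2 {L : FirstOrder.Language.{v, w}} [L.IsAlgebraic] :
    (∀ (φ : CoherentCondition.{u} L) (A : Type u) [L.Structure A] (θ : Set (A × A)),
        θ ∈ φ.spec A ↔ θ ∈ PhiSpec (FundClass φ) A) ∧
    (∀ (K : ∀ B : Type u, L.Structure B → Prop) (A : Type u) [L.Structure A],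
        diagCong A ∈ PhiSpec K A ↔
          ∃ (B : Type u) (iB : L.Structure B), K B iB ∧
            Nonempty (@Language.Embedding L A B _ iB)) := by
  constructor
  · intro φ A _ θ
    constructor
    · intro hspec
      have hθ : IsCong L A θ := φ.isCong A θ hspec
      refine ⟨hθ, Quotient (congSetoid θ hθ), congQuotStructure, ?_, ⟨Language.Embedding.refl _ _⟩⟩
      have h := φ.quotPush_mem A θ θ hθ hspec (le_refl θ)
      have heq : quotPush θ hθ θ = diagCong (Quotient (congSetoid θ hθ)) := by
        ext p
        constructor
        · rintro ⟨a, a', h1, h2, h3⟩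
          show p.1 = p.2
          rw [← h1, ← h2]
          exact Quotient.sound h3
        · intro hp
          refine ⟨p.1.out, p.2.out, p.1.out_eq, p.2.out_eq, ?_⟩
          exact Quotient.exact (p.1.out_eq.trans (Eq.trans hp p.2.out_eq.symm))
      rwa [heq] at h
    · rintro ⟨hθ, B, iB, hB, ⟨e⟩⟩
      have h := φ.preimage_mem A B ((e.toHom).comp (quotHom θ hθ)) (diagCong B) hB
      have heq : pairPreimage ((e.toHom).comp (quotHom θ hθ)).toFun (diagCong B) = θ := by
        ext p
        constructor
        · intro hp
          have : Quotient.mk (congSetoid θ hθ) p.1 = Quotient.mk (congSetoid θ hθ) p.2 :=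
            e.injective hp
          exact Quotient.exact this
        · intro hp
          show e.toFun (Quotient.mk _ p.1) = e.toFun (Quotient.mk _ p.2)
          exact congrArg _ (Quotient.sound hp)
      rwa [heq] at h
  · intro K A _
    constructor
    · rintro ⟨hθ, B, iB, hB, ⟨e⟩⟩
      exact ⟨B, iB, hB, ⟨e.comp diagEmb⟩⟩
    · rintro ⟨B, iB, hB, ⟨e⟩⟩
      exact ⟨diag_isCong, B, iB, hB, ⟨e.comp diagEmbInv⟩⟩
end

section
/- An L-structure A embeds into a direct product of a (possibly empty) family of members of K if and only if A is K-reduced, i.e., the intersection of all congruences in Spec_K(A) equals the diagonal of A. (The empty product is a one-element L-structure.) -/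
open FirstOrder FirstOrder.Language Topology

universe u v w x y

/-- `A` embeds into a direct product of a (possibly empty) family of
members of `K` iff `A` is `K`-reduced. -/
theorem statement5 {L : FirstOrder.Language.{v, w}} [L.IsAlgebraic]
    (K : ∀ B : Type u, L.Structure B → Prop) (A : Type u) [L.Structure A] :
    EmbedsInProduct K A ↔ IsKReduced K A := by
  constructor
  · rintro ⟨ι, B, iB, hK, ⟨e⟩⟩
    letI : L.Structure (∀ j, B j) := @piStructure L _ ι B iB
    apply Set.eq_of_subset_of_subset
    · rintro ⟨a, a'⟩ hmem
      have key : ∀ i : ι, e a i = e a' i := by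
        intro i
        letI : L.Structure (B i) := iB i
        set h : @Language.Hom L A (B i) _ (iB i) :=
          { toFun := fun x => e x i
            map_fun' := by
              intro n f x
              show (e (Structure.funMap f x)) i = _
              rw [e.map_fun]
              rfl
            map_rel' := fun {n} r _ _ => isEmptyElim r } with hh
        have : mapKer h.toFun ∈ SpecK K A := ⟨B i, iB i, hK i, h, rfl⟩
        exact hmem _ this
      exact e.injective (funext key)
    · rintro ⟨a, a'⟩ (h : a = a')
      subst h
      intro θ hθ
      exact (isCong_of_mem_specK hθ).1 a
  · intro hred
    classical
    have hch : ∀ θ : {θ // θ ∈ SpecK K A}, ∃ B : Type u, ∃ iB : L.Structure B,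
        K B iB ∧ ∃ h : @Language.Hom L A B _ iB, (θ : Set (A × A)) = mapKer h.toFun :=
      fun θ => θ.2
    choose B iB hK h hker using hch
    letI iP : L.Structure (∀ θ, B θ) := @piStructure L _ _ B iB
    refine ⟨{θ // θ ∈ SpecK K A}, B, iB, hK, ⟨?_⟩⟩
    let f : @Language.Hom L A (∀ θ, B θ) _ iP :=
      { toFun := fun a θ => (h θ).toFun a
        map_fun' := by
          intro n g x
          funext θ
          letI := iB θ
          exact (h θ).map_fun' g x
        map_rel' := fun {n} r _ _ => isEmptyElim r }
    have hinj : Function.Injective f.toFun := by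
      intro a a' hee
      have : (a, a') ∈ ⋂₀ SpecK K A := by
        intro θ hθ
        have heq : (h ⟨θ, hθ⟩).toFun a = (h ⟨θ, hθ⟩).toFun a' := congrFun hee ⟨θ, hθ⟩
        have hk := hker ⟨θ, hθ⟩
        simp only at hk
        rw [hk]
        exact heq
      rw [hred] at this
      exact this
    exact @Embedding.ofInjective L A (∀ θ, B θ) _ iP _ f hinj
end

section
/- Let A be an L-structure, X ⊆ Spec_K(A) an arbitrary subset, and π : A → A/ψ(X) the natural projection. Then the map θ ↦ π⁻¹(θ) is a homeomorphism from Spec_K(A/ψ(X)), equipped with its Zariski topology, onto the Zariski closure V(ψ(X)) of X, equipped with the subspace topology induced from the Zariski topology on Spec_K(A). -/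
open FirstOrder FirstOrder.Language Topology

universe u v w x y

/-! The pullback `ψ ↦ π⁻¹ψ` and the pushforward `η ↦ η/θ` are mutually inverse between
congruences of `A/θ` and congruences of `A` containing `θ`. They respect the spectra because
homomorphisms `A/θ → B` are exactly the homomorphisms `A → B` whose kernel contains `θ`.
Both directions are continuous since basic closed sets correspond: `S ⊆ π⁻¹ψ ↔ π(S) ⊆ ψ`, and,
`π` being surjective, `T ⊆ ψ ↔ π⁻¹T ⊆ π⁻¹ψ`. -/

section PairPreimage

variable {A : Type*} {B : Type*}

theorem subset_pairPreimage_iff {h : A → B} {S : Set (A × A)} {ψ : Set (B × B)} :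
    S ⊆ pairPreimage h ψ ↔ Prod.map h h '' S ⊆ ψ :=
  Set.image_subset_iff.symm

theorem pairPreimage_subset_pairPreimage_iff {h : A → B} (hh : Function.Surjective h)
    {T ψ : Set (B × B)} : pairPreimage h T ⊆ pairPreimage h ψ ↔ T ⊆ ψ :=
  (hh.prodMap hh).preimage_subset_preimage_iff

theorem SpecK.pairPreimage_mem {L : FirstOrder.Language.{v, w}}
    {K : ∀ B : Type u, L.Structure B → Prop} [L.Structure A] [L.Structure B] (φ : A →[L] B)
    {ψ : Set (B × B)} (hψ : ψ ∈ SpecK K B) : pairPreimage φ ψ ∈ SpecK K A := by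
  obtain ⟨C, iC, hKC, g, rfl⟩ := hψ
  exact ⟨C, iC, hKC, letI := iC; g.comp φ, rfl⟩

end PairPreimage

namespace IsCong

variable {L : FirstOrder.Language.{v, w}} {A : Type*} [L.Structure A]
  {θ : Set (A × A)} (hθ : IsCong L A θ)

theorem quotPush_eq_image (η : Set (A × A)) :
    quotPush θ hθ η = Prod.map (Quotient.mk _) (Quotient.mk _) '' η := by
  ext ⟨q, q'⟩
  constructor
  · rintro ⟨a, a', rfl, rfl, h⟩
    exact ⟨(a, a'), h, rfl⟩
  · rintro ⟨⟨a, a'⟩, h, he⟩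
    exact ⟨a, a', congrArg Prod.fst he, congrArg Prod.snd he, h⟩

theorem quotPush_pairPreimage
    (ψ : Set (Quotient (congSetoid θ hθ) × Quotient (congSetoid θ hθ))) :
    quotPush θ hθ (pairPreimage (Quotient.mk _) ψ) = ψ := by
  rw [quotPush_eq_image]
  exact Set.image_preimage_eq ψ (Quotient.mk_surjective.prodMap Quotient.mk_surjective)

theorem pairPreimage_quotPush {η : Set (A × A)} (hη : IsCong L A η) (hle : θ ⊆ η) :
    pairPreimage (Quotient.mk _) (quotPush θ hθ η) = η := by
  refine Set.Subset.antisymm ?_ fun p hp => ⟨p.1, p.2, rfl, rfl, hp⟩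
  rintro ⟨a, a'⟩ ⟨b, b', hb, hb', hbb'⟩
  have hba : (b, a) ∈ η := hle (Quotient.exact hb)
  have hb'a' : (b', a') ∈ η := hle (Quotient.exact hb')
  exact hη.2.2.1 _ _ _ (hη.2.1 _ _ hba) (hη.2.2.1 _ _ _ hbb' hb'a')

theorem subset_pairPreimage_mk
    {ψ : Set (Quotient (congSetoid θ hθ) × Quotient (congSetoid θ hθ))}
    (hψ : ∀ q, (q, q) ∈ ψ) : θ ⊆ pairPreimage (Quotient.mk _) ψ := fun p hp => by
  show (Quotient.mk _ p.1, Quotient.mk _ p.2) ∈ ψ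
  rw [Quotient.sound (s := congSetoid θ hθ) hp]
  exact hψ _

variable [L.IsAlgebraic]

theorem mk_funMap {n : ℕ} (f : L.Functions n) (a : Fin n → A) :
    Quotient.mk (congSetoid θ hθ) (Structure.funMap f a)
      = Structure.funMap f (fun i => Quotient.mk (congSetoid θ hθ) (a i)) :=
  Quotient.sound <| hθ.2.2.2 n f _ _ fun i =>
    Quotient.exact (Quotient.out_eq (Quotient.mk (congSetoid θ hθ) (a i))).symm

def mkHom : A →[L] Quotient (congSetoid θ hθ) where
  toFun := Quotient.mk (congSetoid θ hθ)
  map_fun' f a := hθ.mk_funMap f a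
  map_rel' r := isEmptyElim r

def liftHom {B : Type*} [L.Structure B] (g : A →[L] B) (hg : θ ⊆ mapKer g) :
    Quotient (congSetoid θ hθ) →[L] B where
  toFun := Quotient.lift g fun _ _ hab => hg hab
  map_fun' {n} f q := by
    obtain ⟨a, rfl⟩ : ∃ a : Fin n → A, (fun i => Quotient.mk _ (a i)) = q :=
      ⟨fun i => (q i).out, funext fun i => Quotient.out_eq (q i)⟩
    rw [← hθ.mk_funMap]
    exact g.map_fun f a
  map_rel' r := isEmptyElim r

variable {K : ∀ B : Type u, L.Structure B → Prop}

theorem quotPush_mem_specK {η : Set (A × A)} (hη : η ∈ SpecK K A) (hle : θ ⊆ η) :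
    quotPush θ hθ η ∈ SpecK K (Quotient (congSetoid θ hθ)) := by
  obtain ⟨B, iB, hKB, g, rfl⟩ := hη
  let := iB
  exact ⟨B, iB, hKB, hθ.liftHom g hle, hθ.quotPush_pairPreimage (mapKer (hθ.liftHom g hle))⟩

variable (K)

def specQuotEquiv : {ψ // ψ ∈ SpecK K (Quotient (congSetoid θ hθ))} ≃ VZar K A θ where
  toFun ψ := ⟨⟨pairPreimage (Quotient.mk _) ψ.1, SpecK.pairPreimage_mem hθ.mkHom ψ.2⟩,
    hθ.subset_pairPreimage_mk (isCong_of_mem_specK ψ.2).1⟩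
  invFun η := ⟨quotPush θ hθ η.1.1, hθ.quotPush_mem_specK η.1.2 η.2⟩
  left_inv ψ := Subtype.ext (hθ.quotPush_pairPreimage ψ.1)
  right_inv η :=
    Subtype.ext (Subtype.ext (hθ.pairPreimage_quotPush (isCong_of_mem_specK η.1.2) η.2))

end IsCong

section Zariski

attribute [local instance] zariskiTopology

variable {L : FirstOrder.Language.{v, w}} {K : ∀ B : Type u, L.Structure B → Prop}
  {A : Type*} [L.Structure A]

theorem isClosed_vZar (S : Set (A × A)) : IsClosed (VZar K A S) :=
  ⟨TopologicalSpace.GenerateOpen.basic _ ⟨S, rfl⟩⟩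

theorem continuous_zariski_iff {Y : Type*} [TopologicalSpace Y]
    {f : Y → {θ // θ ∈ SpecK K A}} : Continuous f ↔ ∀ S, IsClosed (f ⁻¹' VZar K A S) := by
  refine continuous_generateFrom_iff.trans ⟨fun h S => ⟨h _ ⟨S, rfl⟩⟩, ?_⟩
  rintro h _ ⟨S, rfl⟩
  exact (h S).isOpen_compl

variable (K) [L.IsAlgebraic] {θ : Set (A × A)} (hθ : IsCong L A θ)

def IsCong.specQuotHomeomorph :
    {ψ // ψ ∈ SpecK K (Quotient (congSetoid θ hθ))} ≃ₜ VZar K A θ where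
  toEquiv := hθ.specQuotEquiv K
  continuous_toFun := continuous_induced_rng.2 <| continuous_zariski_iff.2 fun S => by
    convert isClosed_vZar (K := K) (Prod.map (Quotient.mk (congSetoid θ hθ)) (Quotient.mk _) '' S)
      using 1
    ext ψ
    exact subset_pairPreimage_iff
  continuous_invFun := continuous_zariski_iff.2 fun T => by
    convert (isClosed_vZar (pairPreimage (Quotient.mk (congSetoid θ hθ)) T)).preimage
      continuous_subtype_val using 1
    ext η
    conv_rhs => rw [← (hθ.specQuotEquiv K).apply_symm_apply η]
    exact (pairPreimage_subset_pairPreimage_iff Quotient.mk_surjective).symm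

end Zariski

theorem statement8_general {L : FirstOrder.Language.{v, w}} [L.IsAlgebraic]
    (K : ∀ B : Type u, L.Structure B → Prop) (A : Type u) [L.Structure A]
    (X : Set (Set (A × A))) (hc : IsCong L A (⋂₀ X)) :
    letI t1 : TopologicalSpace {θ // θ ∈ SpecK K (Quotient (congSetoid (⋂₀ X) hc))} :=
      zariskiTopology K (Quotient (congSetoid (⋂₀ X) hc))
    letI t2 : TopologicalSpace (↥(VZar K A (⋂₀ X))) :=
      TopologicalSpace.induced Subtype.val (zariskiTopology K A)
    ∃ F : @Homeomorph {θ // θ ∈ SpecK K (Quotient (congSetoid (⋂₀ X) hc))}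
        (↥(VZar K A (⋂₀ X))) t1 t2,
      ∀ ψ : {θ // θ ∈ SpecK K (Quotient (congSetoid (⋂₀ X) hc))},
        ((@Homeomorph.toEquiv _ _ t1 t2 F) ψ).1.1 =
          pairPreimage (Quotient.mk (congSetoid (⋂₀ X) hc)) ψ.1 :=
  ⟨hc.specQuotHomeomorph K, fun _ => rfl⟩

/-- for `X ⊆ Spec_K A`, the map `θ ↦ π⁻¹(θ)` is a homeomorphism from
`Spec_K (A/ψ(X))` (with its Zariski topology) onto the Zariski closed set `V(ψ(X))`
(with the subspace topology induced from the Zariski topology on `Spec_K A`). -/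
theorem statement8 {L : FirstOrder.Language.{v, w}} [L.IsAlgebraic]
    (K : ∀ B : Type u, L.Structure B → Prop) (A : Type u) [L.Structure A]
    (X : Set (Set (A × A))) (hX : X ⊆ SpecK K A) (hc : IsCong L A (⋂₀ X)) :
    letI t1 : TopologicalSpace {θ // θ ∈ SpecK K (Quotient (congSetoid (⋂₀ X) hc))} :=
      zariskiTopology K (Quotient (congSetoid (⋂₀ X) hc))
    letI t2 : TopologicalSpace (↥(VZar K A (⋂₀ X))) :=
      TopologicalSpace.induced Subtype.val (zariskiTopology K A)
    ∃ F : @Homeomorph {θ // θ ∈ SpecK K (Quotient (congSetoid (⋂₀ X) hc))}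
        (↥(VZar K A (⋂₀ X))) t1 t2,
      ∀ ψ : {θ // θ ∈ SpecK K (Quotient (congSetoid (⋂₀ X) hc))},
        ((@Homeomorph.toEquiv _ _ t1 t2 F) ψ).1.1 =
          pairPreimage (Quotient.mk (congSetoid (⋂₀ X) hc)) ψ.1 :=
  statement8_general K A X hc
end

section
/- Let X be a set of variables, I an index set, and for each i ∈ I let Φ_i be a finite nonempty set of pairs of L-terms over X. Then ⋂_{i∈I} ⋃_{ε∈Φ_i} V(ε) = {θ ∈ Spec_K(T(X)) : for every A ∈ K and every a : X → A at which every equation of θ holds, for each i ∈ I at least one equation of Φ_i holds at a}. In particular, for every set T of pairs of L-terms over X, V(T) = {θ ∈ Spec_K(T(X)) : for every A ∈ K and every a : X → A, if every equation of θ holds at a then every equation of T holds at a}. -/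
open FirstOrder FirstOrder.Language Topology

universe u v w x y

theorem termRealize_var {L : FirstOrder.Language.{v, w}} [L.IsAlgebraic] {X : Type x}
    (t : L.Term X) : Term.realize (Term.var : X → L.Term X) t = t := by
  induction t with
  | var x => rfl
  | func f ts ih =>
    show Structure.funMap f _ = _
    show Term.func f _ = _
    exact congrArg _ (funext ih)

/-- For `θ` in the spectrum of the term algebra, membership in `θ` is equivalent to
the equation holding at a canonical assignment into a member of `K`. -/
theorem specK_term_key {L : FirstOrder.Language.{v, w}} [L.IsAlgebraic]
    {K : ∀ B : Type u, L.Structure B → Prop} {X : Type x}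
    {θ : Set (L.Term X × L.Term X)} (hθ : θ ∈ SpecK K (L.Term X)) :
    ∃ (B : Type u) (iB : L.Structure B) (a : X → B), K B iB ∧
      ∀ pq : L.Term X × L.Term X, (pq ∈ θ ↔ EqHolds iB a pq) := by
  obtain ⟨B, iB, hKB, h, rfl⟩ := hθ
  letI := iB
  refine ⟨B, iB, fun x => h.toFun (Term.var x), hKB, fun pq => ?_⟩
  have key : ∀ t : L.Term X, evalAt iB (fun x => h.toFun (Term.var x)) t = h.toFun t := by
    intro t
    have := @HomClass.realize_term L (L.Term X) B _ iB X _ _ _ h t Term.var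
    show Term.realize (⇑h ∘ Term.var) t = _
    rw [this, termRealize_var]; rfl
  constructor
  · intro hm
    show evalAt iB _ pq.1 = evalAt iB _ pq.2
    rw [key, key]; exact hm
  · intro hm
    have : evalAt iB (fun x => h.toFun (Term.var x)) pq.1
        = evalAt iB (fun x => h.toFun (Term.var x)) pq.2 := hm
    rw [key, key] at this; exact this

/-- the closed form of Zariski topologically closed subsets of the
`K`-spectrum of the term algebra, and the special case of Zariski closed sets `V(T)`. -/
theorem statement10 {L : FirstOrder.Language.{v, w}} [L.IsAlgebraic]
    (K : ∀ B : Type u, L.Structure B → Prop) (X : Type x) (I : Type y)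
    (Φ : I → Set (L.Term X × L.Term X))
    (hfin : ∀ i, (Φ i).Finite) (hne : ∀ i, (Φ i).Nonempty) :
    (⋂ i, ⋃ ε ∈ Φ i, {θ : {θ // θ ∈ SpecK K (L.Term X)} | ε ∈ θ.1}) =
      {θ : {θ // θ ∈ SpecK K (L.Term X)} |
        ∀ (A : Type u) (iA : L.Structure A), K A iA → ∀ a : X → A,
          (∀ pq ∈ θ.1, EqHolds iA a pq) → ∀ i, ∃ ε ∈ Φ i, EqHolds iA a ε} ∧
    ∀ T : Set (L.Term X × L.Term X),
      VClosed K (L.Term X) T =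
        {θ ∈ SpecK K (L.Term X) |
          ∀ (A : Type u) (iA : L.Structure A), K A iA → ∀ a : X → A,
            (∀ pq ∈ θ, EqHolds iA a pq) → ∀ pq ∈ T, EqHolds iA a pq} := by
  constructor
  · ext θ
    simp only [Set.mem_iInter, Set.mem_iUnion, Set.mem_setOf_eq]
    constructor
    · intro hmem A iA hKA a ha i
      obtain ⟨ε, hε, hεθ⟩ := hmem i
      exact ⟨ε, hε, ha ε hεθ⟩
    · intro h i
      obtain ⟨B, iB, a, hKB, hiff⟩ := specK_term_key θ.2
      obtain ⟨ε, hε, hεa⟩ := h B iB hKB a (fun pq hpq => (hiff pq).1 hpq) i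
      exact ⟨ε, hε, (hiff ε).2 hεa⟩
  · intro T
    ext θ
    constructor
    · rintro ⟨hspec, hT⟩
      exact ⟨hspec, fun A iA hKA a ha pq hpq => ha pq (hT hpq)⟩
    · rintro ⟨hspec, h⟩
      refine ⟨hspec, fun pq hpq => ?_⟩
      obtain ⟨B, iB, a, hKB, hiff⟩ := specK_term_key hspec
      exact (hiff pq).2 (h B iB hKB a (fun pq' hpq' => (hiff pq').1 hpq') pq hpq)
end

section
/- Let X be a set of variables and S₁, S₂ disjunctive systems over X. Then V(S₁) ⊆ V(S₂) if and only if K ⊨ S₁ → S₂, i.e., for every A ∈ K and every a : X → A such that each member of S₁ contains an equation holding at a, also each member of S₂ contains an equation holding at a. -/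
open FirstOrder FirstOrder.Language Topology

universe u v w x y

/-- Any homomorphism from the term algebra is evaluation at its values on variables. -/
theorem hom_eq_evalAt {L : FirstOrder.Language.{v, w}} [L.IsAlgebraic] {X : Type x}
    {B : Type*} (iB : L.Structure B) (h : @Language.Hom L (L.Term X) B _ iB)
    (t : L.Term X) : h.toFun t = evalAt iB (fun x => h.toFun (Term.var x)) t := by
  induction t with
  | var => rfl
  | func f ts ih =>
      have hf := @Language.Hom.map_fun' L (L.Term X) B _ iB h _ f ts
      show h.toFun (Structure.funMap f ts) = _
      rw [hf]
      letI := iB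
      show _ = Structure.funMap f fun i =>
        evalAt iB (fun x => h.toFun (Term.var x)) (ts i)
      exact congrArg _ (funext fun i => ih i)

/-- Evaluation at an assignment, as a homomorphism from the term algebra. -/
def evalHom {L : FirstOrder.Language.{v, w}} [L.IsAlgebraic] {X : Type x}
    {A : Type*} (iA : L.Structure A) (a : X → A) :
    @Language.Hom L (L.Term X) A _ iA where
  toFun := evalAt iA a
  map_fun' := fun _ _ => rfl
  map_rel' := fun r _ _ => isEmptyElim r

/-- for disjunctive systems `S₁, S₂` over `X`,
`V(S₁) ⊆ V(S₂)` iff `K ⊨ S₁ → S₂`. -/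
theorem statement11 {L : FirstOrder.Language.{v, w}} [L.IsAlgebraic]
    (K : ∀ B : Type u, L.Structure B → Prop) (X : Type x)
    (S₁ S₂ : Set (Set (L.Term X × L.Term X)))
    (h₁ : ∀ Φ ∈ S₁, Φ.Finite ∧ Φ.Nonempty) (h₂ : ∀ Φ ∈ S₂, Φ.Finite ∧ Φ.Nonempty) :
    ((⋂ Φ ∈ S₁, ⋃ ε ∈ Φ, {θ : {θ // θ ∈ SpecK K (L.Term X)} | ε ∈ θ.1}) ⊆
        ⋂ Φ ∈ S₂, ⋃ ε ∈ Φ, {θ : {θ // θ ∈ SpecK K (L.Term X)} | ε ∈ θ.1}) ↔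
      ∀ (A : Type u) (iA : L.Structure A), K A iA → ∀ a : X → A,
        (∀ Φ ∈ S₁, ∃ ε ∈ Φ, EqHolds iA a ε) → ∀ Φ ∈ S₂, ∃ ε ∈ Φ, EqHolds iA a ε := by
  constructor
  · intro hsub A iA hA a hS₁
    have hmem : mapKer (evalHom iA a).toFun ∈ SpecK K (L.Term X) :=
      ⟨A, iA, hA, evalHom iA a, rfl⟩
    have hin : (⟨_, hmem⟩ : {θ // θ ∈ SpecK K (L.Term X)}) ∈
        ⋂ Φ ∈ S₁, ⋃ ε ∈ Φ, {θ : {θ // θ ∈ SpecK K (L.Term X)} | ε ∈ θ.1} := by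
      simp only [Set.mem_iInter, Set.mem_iUnion]
      intro Φ hΦ
      obtain ⟨ε, hε, hhold⟩ := hS₁ Φ hΦ
      exact ⟨ε, hε, hhold⟩
    have := hsub hin
    simp only [Set.mem_iInter, Set.mem_iUnion] at this
    intro Φ hΦ
    obtain ⟨ε, hε, hεθ⟩ := this Φ hΦ
    exact ⟨ε, hε, hεθ⟩
  · intro hmod θ hθ
    obtain ⟨B, iB, hB, h, hker⟩ := θ.2
    have key : ∀ ε : L.Term X × L.Term X, ε ∈ θ.1 ↔
        EqHolds iB (fun x => h.toFun (Term.var x)) ε := by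
      intro ε
      rw [show θ.1 = mapKer h.toFun from hker]
      unfold mapKer EqHolds
      rw [← hom_eq_evalAt iB h ε.1, ← hom_eq_evalAt iB h ε.2]
      rfl
    simp only [Set.mem_iInter, Set.mem_iUnion] at hθ ⊢
    have hS₁ : ∀ Φ ∈ S₁, ∃ ε ∈ Φ, EqHolds iB (fun x => h.toFun (Term.var x)) ε := by
      intro Φ hΦ
      obtain ⟨ε, hε, hεθ⟩ := hθ Φ hΦ
      exact ⟨ε, hε, (key ε).mp hεθ⟩
    intro Φ hΦ
    obtain ⟨ε, hε, hhold⟩ := hmod B iB hB _ hS₁ Φ hΦ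
    exact ⟨ε, hε, (key ε).mpr hhold⟩
end

section
/- Suppose K is equationally Noetherian and A is a finitely generated L-structure. Call a congruence ψ on A K-prime if A/ψ is discriminated by K. Then every K-radical congruence on A (i.e., every congruence that is the intersection of a family of members of Spec_K(A)) is the intersection of finitely many K-prime congruences of A. -/
open FirstOrder FirstOrder.Language Topology

universe u v w x y

/-- A `K`-prime congruence on `A`: a congruence `ψ` such that `A/ψ` is discriminated
by `K`. -/
def IsKPrime {L : FirstOrder.Language.{v, w}} [L.IsAlgebraic]
    (K : ∀ B : Type u, L.Structure B → Prop) (A : Type*) [L.Structure A]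
    (ψ : Set (A × A)) : Prop :=
  ∃ hψ : IsCong L A ψ, DiscriminatedBy K (Quotient (congSetoid ψ hψ))

/-!
Over a finitely generated `A`, equational Noetherianity of `K` says that every set of pairs
cuts out the same part of `Spec_K A` as one of its finite subsets. Hence the `K`-radical
congruences satisfy the ascending chain condition, so each of them is a finite meet of
meet-irreducible ones. A meet-irreducible radical `φ` is `K`-prime: if finitely many pairs
outside `φ` met every member of `Spec_K A` above `φ`, then `φ` would be the meet of the
strictly larger radicals generated by `φ` and one of these pairs.
-/

section Radical

variable {L : FirstOrder.Language.{v, w}} {K : ∀ B : Type u, L.Structure B → Prop}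
  {A : Type*} [L.Structure A]

lemma subset_radK (S : Set (A × A)) : S ⊆ radK K A S :=
  fun _ hp => Set.mem_sInter.2 fun _ hθ => hθ.2 hp

lemma radK_mono {S T : Set (A × A)} (h : S ⊆ T) : radK K A S ⊆ radK K A T :=
  Set.sInter_subset_sInter fun _ hθ => ⟨hθ.1, h.trans hθ.2⟩

lemma isKRadical_radK (S : Set (A × A)) : IsKRadical K A (radK K A S) :=
  ⟨VClosed K A S, fun _ hθ => hθ.1, rfl⟩

lemma isKRadical_univ : IsKRadical K A Set.univ :=
  ⟨∅, Set.empty_subset _, Set.sInter_empty.symm⟩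

lemma IsKRadical.inter {θ₁ θ₂ : Set (A × A)} (h₁ : IsKRadical K A θ₁)
    (h₂ : IsKRadical K A θ₂) : IsKRadical K A (θ₁ ∩ θ₂) := by
  obtain ⟨F₁, hF₁, rfl⟩ := h₁
  obtain ⟨F₂, hF₂, rfl⟩ := h₂
  exact ⟨F₁ ∪ F₂, Set.union_subset hF₁ hF₂, (Set.sInter_union F₁ F₂).symm⟩

lemma IsKRadical.radK_eq {θ : Set (A × A)} (h : IsKRadical K A θ) : radK K A θ = θ := by
  obtain ⟨F, hF, rfl⟩ := h
  refine (subset_radK _).antisymm' fun p hp => Set.mem_sInter.2 fun ψ hψ => ?_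
  exact Set.mem_sInter.1 hp ψ ⟨hF hψ, Set.sInter_subset_of_mem hψ⟩

lemma IsKRadical.isCong {θ : Set (A × A)} (h : IsKRadical K A θ) : IsCong L A θ := by
  obtain ⟨F, hF, rfl⟩ := h
  exact isCong_sInter fun _ hψ => isCong_of_mem_specK (hF hψ)

lemma IsKRadical.biInter_radK_insert_eq {φ P : Set (A × A)} (hφ : IsKRadical K A φ)
    (hP : ∀ θ ∈ VClosed K A φ, ∃ p ∈ P, p ∈ θ) :
    ⋂ p ∈ P, radK K A (insert p φ) = φ := by
  refine subset_antisymm (fun x hx => ?_)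
    (Set.subset_iInter₂ fun p _ => (Set.subset_insert p φ).trans (subset_radK _))
  rw [← hφ.radK_eq]
  refine Set.mem_sInter.2 fun θ hθ => ?_
  obtain ⟨p, hpP, hpθ⟩ := hP θ hθ
  exact Set.mem_sInter.1 (Set.mem_iInter₂.1 hx p hpP) θ ⟨hθ.1, Set.insert_subset hpθ hθ.2⟩

end Radical

lemma FirstOrder.Language.Structure.FG.exists_realize_surjective
    {L : FirstOrder.Language.{v, w}} {A : Type*} [L.Structure A] (hfg : Structure.FG L A) :
    ∃ (m : ℕ) (a : Fin m → A), Function.Surjective fun t : L.Term (Fin m) => t.realize a := by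
  obtain ⟨m, a, ha⟩ :=
    Substructure.fg_iff_exists_fin_generating_family.1 (Structure.fg_def.1 hfg)
  refine ⟨m, a, fun x => ?_⟩
  obtain ⟨t, ht⟩ := Substructure.mem_closure_iff_exists_term.1 (ha ▸ Substructure.mem_top x)
  refine ⟨t.relabel fun y => y.2.choose, ?_⟩
  simp only [Term.realize_relabel, ← ht]
  congr 1
  funext y
  exact y.2.choose_spec

section Noetherian

variable {L : FirstOrder.Language.{v, w}} {K : ∀ B : Type u, L.Structure B → Prop}
  {A : Type*} [L.Structure A]

theorem exists_finite_vClosed_subset (hK : EqNoetherian K) (hfg : Structure.FG L A)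
    (S : Set (A × A)) : ∃ S₀ ⊆ S, S₀.Finite ∧ VClosed K A S₀ ⊆ VClosed K A S := by
  obtain ⟨m, a, ha⟩ := hfg.exists_realize_surjective
  choose t ht using ha
  obtain ⟨S₀, hS₀S, hS₀, hT₀⟩ :=
    Set.exists_subset_image_finite_and.1 (hK m (Prod.map t t '' S))
  refine ⟨S₀, hS₀S, hS₀, ?_⟩
  rintro _ ⟨⟨B, iB, hB, h, rfl⟩, hS₀h⟩
  have holds_iff (p : A × A) : EqHolds iB (h ∘ a) (Prod.map t t p) ↔ p ∈ mapKer h.toFun := by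
    simp only [EqHolds, evalAt, Prod.map_fst, Prod.map_snd, HomClass.realize_term, ht]
    rfl
  refine ⟨⟨B, iB, hB, h, rfl⟩, fun p hp => (holds_iff p).1 ?_⟩
  refine hT₀ B iB hB (h ∘ a) ?_ _ (Set.mem_image_of_mem _ hp)
  rintro _ ⟨q, hq, rfl⟩
  exact (holds_iff q).2 (hS₀h hq)

end Noetherian

abbrev KRadical {L : FirstOrder.Language.{v, w}} (K : ∀ B : Type u, L.Structure B → Prop)
    (A : Type*) [L.Structure A] : Type _ :=
  {θ : Set (A × A) // IsKRadical K A θ}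

namespace KRadical

variable {L : FirstOrder.Language.{v, w}} {K : ∀ B : Type u, L.Structure B → Prop}
  {A : Type*} [L.Structure A]

instance : SemilatticeInf (KRadical K A) := Subtype.semilatticeInf fun _ _ => IsKRadical.inter

instance : OrderTop (KRadical K A) := Subtype.orderTop isKRadical_univ

lemma coe_finset_inf {ι : Type*} (s : Finset ι) (f : ι → KRadical K A) :
    ((s.inf f : KRadical K A) : Set (A × A)) = ⋂ i ∈ s, (f i : Set (A × A)) := by
  rw [Finset.inf_coe (Pinf := fun _ _ => IsKRadical.inter), Finset.inf_eq_iInf]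
  rfl

theorem wellFoundedGT (hK : EqNoetherian K) (hfg : Structure.FG L A) :
    WellFoundedGT (KRadical K A) := by
  refine wellFoundedGT_iff_monotone_chain_condition.2 fun c => ?_
  obtain ⟨S₀, hS₀S, hS₀, hV⟩ := exists_finite_vClosed_subset hK hfg (⋃ n, (c n).1)
  have hS₀c : ∀ p ∈ S₀, ∃ n, p ∈ (c n).1 := fun p hp => Set.mem_iUnion.1 (hS₀S hp)
  choose! index hindex using hS₀c
  obtain ⟨N, hN⟩ := (hS₀.image index).bddAbove
  have hS₀N : S₀ ⊆ (c N).1 := fun p hp =>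
    c.monotone (hN (Set.mem_image_of_mem index hp)) (hindex p hp)
  refine ⟨N, fun m hm => (c.monotone hm).antisymm ?_⟩
  calc (c m).1 = radK K A (c m).1 := (c m).2.radK_eq.symm
    _ ⊆ radK K A (⋃ n, (c n).1) := radK_mono (Set.subset_iUnion (fun n => (c n).1) m)
    _ ⊆ radK K A S₀ := Set.sInter_subset_sInter hV
    _ ⊆ radK K A (c N).1 := radK_mono hS₀N
    _ = (c N).1 := (c N).2.radK_eq

end KRadical

section Prime

variable {L : FirstOrder.Language.{v, w}} [L.IsAlgebraic]
  {K : ∀ B : Type u, L.Structure B → Prop} {A : Type*} [L.Structure A]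

noncomputable def congQuotLift {θ : Set (A × A)} (hθ : IsCong L A θ) {B : Type*}
    [L.Structure B] (h : A →[L] B) (hker : θ ⊆ mapKer h) :
    Quotient (congSetoid θ hθ) →[L] B where
  toFun := Quotient.lift h fun _ _ hab => hker hab
  map_fun' {n} f q := by
    change h (Structure.funMap f fun i => (q i).out) = _
    rw [h.map_fun]
    congr 1
    funext i
    exact congrArg (Quotient.lift h fun _ _ hab => hker hab) (Quotient.out_eq (q i))
  map_rel' r := isEmptyElim r

theorem isKPrime_of_forall_finset {θ : Set (A × A)} (hθ : IsCong L A θ)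
    (havoid : ∀ P : Finset (A × A), (∀ p ∈ P, p ∉ θ) →
      ∃ θ' ∈ VClosed K A θ, ∀ p ∈ P, p ∉ θ') :
    IsKPrime K A θ := by
  classical
  refine ⟨hθ, fun W hW => ?_⟩
  let outPair (q : Quotient (congSetoid θ hθ) × Quotient (congSetoid θ hθ)) : A × A :=
    (q.1.out, q.2.out)
  have houtPair {q} : outPair q ∈ θ ↔ q.1 = q.2 :=
    @Quotient.out_equiv_out _ (congSetoid θ hθ) q.1 q.2
  obtain ⟨θ', ⟨⟨B, iB, hB, h, rfl⟩, hθθ'⟩, hθ'⟩ :=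
    havoid (((hW.prod hW).toFinset.filter fun q => q.1 ≠ q.2).image outPair) (by
      simp only [Finset.mem_image, Finset.mem_filter]
      rintro _ ⟨q, ⟨-, hq⟩, rfl⟩
      exact mt houtPair.1 hq)
  refine ⟨B, iB, hB, congQuotLift hθ h hθθ', fun x hx y hy hxy => by_contra fun hne => ?_⟩
  refine hθ' (outPair (x, y)) (Finset.mem_image_of_mem _ ?_) ?_
  · simpa only [Finset.mem_filter, Set.Finite.mem_toFinset] using ⟨⟨hx, hy⟩, hne⟩
  · rw [← Quotient.out_eq x, ← Quotient.out_eq y] at hxy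
    exact hxy

theorem KRadical.isKPrime_of_infIrred {φ : KRadical K A} (hφ : InfIrred φ) :
    IsKPrime K A φ := by
  refine isKPrime_of_forall_finset φ.2.isCong fun P hPφ => ?_
  by_contra! hP
  let extend (p : A × A) : KRadical K A := ⟨radK K A (insert p φ), isKRadical_radK _⟩
  have hinf : P.inf extend = φ :=
    Subtype.ext <| (KRadical.coe_finset_inf P extend).trans (φ.2.biInter_radK_insert_eq hP)
  obtain ⟨p, hpP, hp⟩ := hφ.finset_inf_eq hinf
  exact hPφ p hpP (hp ▸ subset_radK _ (Set.mem_insert p φ))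

end Prime

/-- if `K` is equationally Noetherian and `A` is finitely generated,
then every `K`-radical congruence on `A` is the intersection of finitely many `K`-prime
congruences. -/
theorem statement12 {L : FirstOrder.Language.{v, w}} [L.IsAlgebraic]
    (K : ∀ B : Type u, L.Structure B → Prop) (hK : EqNoetherian K)
    (A : Type u) [L.Structure A] (hfg : Structure.FG L A)
    (θ : Set (A × A)) (hθ : IsKRadical K A θ) :
    ∃ (n : ℕ) (ψ : Fin n → Set (A × A)),
      (∀ i, IsKPrime K A (ψ i)) ∧ θ = ⋂ i, ψ i := by
  have := KRadical.wellFoundedGT hK hfg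
  obtain ⟨s, hs, hirred⟩ := exists_infIrred_decomposition (⟨θ, hθ⟩ : KRadical K A)
  obtain ⟨n, e, he⟩ := s.finite_toSet.fin_embedding
  refine ⟨n, fun i => e i, fun i =>
    KRadical.isKPrime_of_infIrred (hirred (Finset.mem_coe.1 (he ▸ Set.mem_range_self i))), ?_⟩
  calc θ = ((s.inf id : KRadical K A) : Set (A × A)) := by rw [hs]
    _ = ⋂ φ ∈ (s : Set (KRadical K A)), (φ : Set (A × A)) := KRadical.coe_finset_inf s id
    _ = ⋂ i, (e i : Set (A × A)) := by rw [← he, Set.biInter_range]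
end

section
/- Fix an L-structure A and n ∈ ℕ, and let K = {A}. For a set T of pairs of L-terms in variables x₁,…,xₙ, let V_A(T) = {a ∈ Aⁿ : every equation of T holds at a} (an algebraic subset of Aⁿ). Then the map α : Aⁿ → Spec_K(T(x₁,…,xₙ)) given by a ↦ ker h_a satisfies: (1) α is surjective onto Spec_K(T(x₁,…,xₙ)); (2) for every S ⊆ T(x₁,…,xₙ)², α⁻¹(V(S)) = V_A(S); (3) for every T, α(V_A(T)) = V(T); consequently the preimage map under α is a bijection between the Zariski closed subsets of Spec_K(T(x₁,…,xₙ)) and the algebraic subsets of Aⁿ. -/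
open FirstOrder FirstOrder.Language Topology

universe u v w x y

/-- Evaluation as a homomorphism from the term algebra. -/
def evalHomAux {L : FirstOrder.Language.{v, w}} [L.IsAlgebraic] {A : Type*}
    (iA : L.Structure A) {X : Type x} (a : X → A) :
    @Language.Hom L (L.Term X) A termStructure iA :=
  letI := iA
  { toFun := fun t => Term.realize a t
    map_fun' := fun {m} f ts => rfl
    map_rel' := fun {m} r _ _ => isEmptyElim r }

theorem hom_eq_realize {L : FirstOrder.Language.{v, w}} [L.IsAlgebraic] {A : Type*}
    (iA : L.Structure A) {X : Type x}
    (h : @Language.Hom L (L.Term X) A termStructure iA) (t : L.Term X) :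
    h.toFun t = evalAt iA (fun i => h.toFun (Term.var i)) t := by
  letI := iA
  induction t with
  | var i => rfl
  | func f ts ih =>
      have : (Term.func f ts : L.Term X) =
          @Structure.funMap L (L.Term X) termStructure _ f ts := rfl
      rw [this, h.map_fun']
      show _ = Term.realize _ (Term.func f ts)
      simp only [Term.realize, evalAt] at *
      exact congrArg _ (funext fun i => ih i)

/-- for `K = {A}`, the map `α : Aⁿ → Spec_K (T(x₁,…,xₙ))`,
`a ↦ ker h_a`, is surjective onto the spectrum, satisfies `α⁻¹(V(S)) = V_A(S)` and
`α(V_A(T)) = V(T)`, and the preimage map under `α` is a bijection between the Zariski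
closed subsets of the spectrum and the algebraic subsets of `Aⁿ`. -/
theorem statement13 {L : FirstOrder.Language.{v, w}} [L.IsAlgebraic]
    (A : Type u) (iA : L.Structure A) (n : ℕ)
    (K : ∀ B : Type u, L.Structure B → Prop)
    (hK : ∀ (B : Type u) (iB : L.Structure B), K B iB ↔ B = A ∧ HEq iB iA)
    (α : (Fin n → A) → Set (L.Term (Fin n) × L.Term (Fin n)))
    (hα : ∀ a, α a = mapKer (evalAt iA a)) :
    (∀ a, α a ∈ SpecK K (L.Term (Fin n))) ∧
    (∀ θ ∈ SpecK K (L.Term (Fin n)), ∃ a, α a = θ) ∧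
    (∀ S : Set (L.Term (Fin n) × L.Term (Fin n)),
        α ⁻¹' VClosed K (L.Term (Fin n)) S = {a | ∀ pq ∈ S, EqHolds iA a pq}) ∧
    (∀ T : Set (L.Term (Fin n) × L.Term (Fin n)),
        α '' {a | ∀ pq ∈ T, EqHolds iA a pq} = VClosed K (L.Term (Fin n)) T) ∧
    Set.BijOn (fun C => α ⁻¹' C)
      {C | ∃ S, C = VClosed K (L.Term (Fin n)) S}
      {D | ∃ T : Set (L.Term (Fin n) × L.Term (Fin n)), D = {a | ∀ pq ∈ T, EqHolds iA a pq}} := by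
  have hmem : ∀ a, α a ∈ SpecK K (L.Term (Fin n)) := by
    intro a
    refine ⟨A, iA, (hK A iA).2 ⟨rfl, HEq.rfl⟩, evalHomAux iA a, ?_⟩
    rw [hα]; rfl
  have hsurj : ∀ θ ∈ SpecK K (L.Term (Fin n)), ∃ a, α a = θ := by
    rintro θ ⟨B, iB, hB, h, rfl⟩
    obtain ⟨rfl, hiB⟩ := (hK B iB).1 hB
    cases hiB
    refine ⟨fun i => h.toFun (Term.var i), ?_⟩
    rw [hα]
    ext ⟨p, q⟩
    simp only [mapKer, Set.mem_setOf_eq]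
    rw [← hom_eq_realize _ h p, ← hom_eq_realize _ h q]
  have hpre : ∀ S : Set (L.Term (Fin n) × L.Term (Fin n)),
      α ⁻¹' VClosed K (L.Term (Fin n)) S = {a | ∀ pq ∈ S, EqHolds iA a pq} := by
    intro S
    ext a
    constructor
    · rintro ⟨-, hS⟩ pq hpq
      have := hS hpq
      rw [hα] at this
      exact this
    · intro ha
      refine ⟨hmem a, fun pq hpq => ?_⟩
      rw [hα]
      exact ha pq hpq
  have himg : ∀ T : Set (L.Term (Fin n) × L.Term (Fin n)),
      α '' {a | ∀ pq ∈ T, EqHolds iA a pq} = VClosed K (L.Term (Fin n)) T := by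
    intro T
    ext θ
    constructor
    · rintro ⟨a, ha, rfl⟩
      rw [← hpre T] at ha
      exact ha
    · rintro hθ
      obtain ⟨a, rfl⟩ := hsurj θ hθ.1
      exact ⟨a, by rw [← hpre T]; exact hθ, rfl⟩
  refine ⟨hmem, hsurj, hpre, himg, ?_, ?_, ?_⟩
  · rintro C ⟨S, rfl⟩
    exact ⟨S, hpre S⟩
  · rintro C₁ ⟨S₁, rfl⟩ C₂ ⟨S₂, rfl⟩ hC
    have h1 : ∀ S : Set (L.Term (Fin n) × L.Term (Fin n)),
        α '' (α ⁻¹' VClosed K (L.Term (Fin n)) S) = VClosed K (L.Term (Fin n)) S := by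
      intro S; rw [hpre S, himg S]
    change α ⁻¹' _ = α ⁻¹' _ at hC
    rw [← h1 S₁, ← h1 S₂, hC]
  · rintro D ⟨T, rfl⟩
    exact ⟨VClosed K (L.Term (Fin n)) T, ⟨T, rfl⟩, hpre T⟩
end

section
/- Let K be an equationally Noetherian class of L-structures and A a finitely generated L-structure. The following are equivalent: (1) A satisfies every quasi-identity that holds in all members of K; (2) A embeds into a direct product of a family of members of K; (3) A is K-reduced, i.e., ⋂Spec_K(A) equals the diagonal of A; (4) A is separated by K, i.e., for all a ≠ b in A there is a homomorphism h from A into a member of K with h(a) ≠ h(b). -/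
open FirstOrder FirstOrder.Language Topology

universe u v w x y

/-- The quasi-identity `(T₀, (p, q))` holds in the structure `B`. -/
def QuasiIdHoldsIn {L : FirstOrder.Language.{v, w}} (B : Type*) (iB : L.Structure B)
    {n : ℕ} (T₀ : Set (L.Term (Fin n) × L.Term (Fin n))) (p q : L.Term (Fin n)) : Prop :=
  ∀ b : Fin n → B, (∀ pq ∈ T₀, EqHolds iB b pq) → evalAt iB b p = evalAt iB b q

/-- In a product structure, term realization is computed coordinatewise. -/
theorem pi_realize_aux {L : FirstOrder.Language.{v, w}} [L.IsAlgebraic]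
    {ι : Type*} {B : ι → Type*} [∀ i, L.Structure (B i)] {α : Type*}
    (v : α → ∀ i, B i) (t : L.Term α) (i : ι) :
    Term.realize v t i = Term.realize (fun x => v x i) t := by
  induction t with
  | var => rfl
  | func f ts ih =>
    show Structure.funMap f (fun j => Term.realize v (ts j)) i = _
    show Structure.funMap f (fun j => Term.realize v (ts j) i) = _
    rw [Term.realize]
    exact congrArg _ (funext fun j => ih j)

/-- A finitely generated structure admits a finite tuple of generators such that
every element is the realization of a term. -/
theorem exists_generators_aux {L : FirstOrder.Language.{v, w}}
    {A : Type*} [L.Structure A] (hfg : Structure.FG L A) :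
    ∃ (n : ℕ) (g : Fin n → A), ∀ a : A, ∃ t : L.Term (Fin n), Term.realize g t = a := by
  obtain ⟨S, hS⟩ := hfg.out
  refine ⟨S.card, fun i => (S.equivFin.symm i : A), fun a => ?_⟩
  have ha : a ∈ Substructure.closure L (S : Set A) := hS ▸ Substructure.mem_top a
  obtain ⟨t, ht⟩ := Substructure.mem_closure_iff_exists_term.1 ha
  refine ⟨t.relabel fun x : (S : Set A) => S.equivFin ⟨x.1, x.2⟩, ?_⟩
  rw [Term.realize_relabel]
  convert ht using 2
  funext x
  simp

/-- for an equationally Noetherian class `K` and a finitely generated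
`A`, the following are equivalent: `A` satisfies all quasi-identities of `K`; `A` embeds
into a product of members of `K`; `A` is `K`-reduced; `A` is separated by `K`. -/
theorem statement15 {L : FirstOrder.Language.{v, w}} [L.IsAlgebraic]
    (K : ∀ B : Type u, L.Structure B → Prop) (hK : EqNoetherian K)
    (A : Type u) [iA : L.Structure A] (hfg : Structure.FG L A) :
    [∀ (n : ℕ) (T₀ : Set (L.Term (Fin n) × L.Term (Fin n))), T₀.Finite →
        ∀ p q : L.Term (Fin n),
          (∀ (B : Type u) (iB : L.Structure B), K B iB → QuasiIdHoldsIn B iB T₀ p q) →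
            QuasiIdHoldsIn A iA T₀ p q,
      EmbedsInProduct K A,
      IsKReduced K A,
      ∀ a b : A, a ≠ b → ∃ (B : Type u) (iB : L.Structure B), K B iB ∧
        ∃ h : @Language.Hom L A B _ iB, h.toFun a ≠ h.toFun b].TFAE := by
  tfae_have 1 → 4 := by
    intro h1 a b hab
    by_contra hcon
    push_neg at hcon
    obtain ⟨n, g, hg⟩ := exists_generators_aux hfg
    choose tm htm using hg
    set T : Set (L.Term (Fin n) × L.Term (Fin n)) :=
      {pq | Term.realize g pq.1 = Term.realize g pq.2} with hTdef
    obtain ⟨T₀, hsub, hfin, himp⟩ := hK n T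
    apply hab
    have hq : ∀ (B : Type u) (iB : L.Structure B), K B iB →
        QuasiIdHoldsIn B iB T₀ (tm a) (tm b) := by
      intro B iB hB b' hb'
      have hT : ∀ pq ∈ T, EqHolds iB b' pq := himp B iB hB b' hb'
      have hcomm : ∀ s : L.Term (Fin n),
          evalAt iB b' (tm (Term.realize g s)) = evalAt iB b' s :=
        fun s => hT (tm (Term.realize g s), s) (htm (Term.realize g s))
      have hmf : ∀ {m : ℕ} (f : L.Functions m) (x : Fin m → A),
          evalAt iB b' (tm (Structure.funMap f x)) =
            @Structure.funMap L B iB m f (fun j => evalAt iB b' (tm (x j))) := by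
        intro m f x
        have h1' : Structure.funMap f x =
            Term.realize g (Term.func f fun j => tm (x j)) := by
          show _ = Structure.funMap f fun j => Term.realize g (tm (x j))
          exact congrArg _ (funext fun j => (htm (x j)).symm)
        rw [h1', hcomm]
        rfl
      let h : @Language.Hom L A B _ iB :=
        @Language.Hom.mk L A B _ iB (fun x => evalAt iB b' (tm x))
          (fun {m} f x => hmf f x) (fun {m} r => isEmptyElim r)
      have := hcon B iB hB h
      exact this
    have hg' : ∀ pq ∈ T₀, EqHolds iA g pq := fun pq hpq => hsub hpq
    have := h1 n T₀ hfin (tm a) (tm b) hq g hg'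
    calc a = Term.realize g (tm a) := (htm a).symm
      _ = Term.realize g (tm b) := this
      _ = b := htm b
  tfae_have 4 → 2 := by
    intro h4
    classical
    choose Bf iBf hKf hθ hker using fun θ : {θ // θ ∈ SpecK K A} => θ.2
    refine ⟨{θ // θ ∈ SpecK K A}, Bf, iBf, hKf, ?_⟩
    letI iP := @piStructure L _ {θ // θ ∈ SpecK K A} Bf iBf
    let e : @Language.Hom L A _ _ iP :=
      @Language.Hom.mk L A _ _ iP (fun a θ => (hθ θ).toFun a)
        (fun {m} f x => by
          funext θ
          exact (hθ θ).map_fun' f x)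
        (fun {m} r => isEmptyElim r)
    have hinj : Function.Injective e.toFun := by
      intro a b hab
      by_contra hne
      obtain ⟨B, iB, hB, h, hsep⟩ := h4 a b hne
      have hmem : mapKer h.toFun ∈ SpecK K A := ⟨B, iB, hB, h, rfl⟩
      have : (hθ ⟨_, hmem⟩).toFun a = (hθ ⟨_, hmem⟩).toFun b := congrFun hab ⟨_, hmem⟩
      have : (a, b) ∈ mapKer (hθ ⟨_, hmem⟩).toFun := this
      rw [← hker ⟨_, hmem⟩] at this
      exact hsep this
    exact ⟨(@Language.Embedding.ofInjective L A _ _ iP _ e hinj)⟩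
  tfae_have 2 → 1 := by
    rintro ⟨ι, B, iB, hKB, ⟨e⟩⟩ n T₀ _ p q hq b hb
    letI iP := @piStructure L _ ι B iB
    letI : ∀ i, L.Structure (B i) := iB
    have herm : ∀ {α : Type} (v : α → A) (t : L.Term α),
        Term.realize (e.toFun ∘ v) t = e.toFun (Term.realize v t) := by
      intro α v t
      induction t with
      | var => rfl
      | func f ts ih =>
        show Structure.funMap f (fun j => Term.realize (e.toFun ∘ v) (ts j)) = _
        rw [show (Term.realize v (Term.func f ts)) =
            Structure.funMap f (fun j => Term.realize v (ts j)) from rfl,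
          e.map_fun' f (fun j => Term.realize v (ts j))]
        exact congrArg _ (funext fun j => ih j)
    have hcoord : ∀ i : ι,
        Term.realize (fun x => e.toFun (b x) i) p = Term.realize (fun x => e.toFun (b x) i) q := by
      intro i
      refine hq (B i) (iB i) (hKB i) (fun x => e.toFun (b x) i) ?_
      intro pq hpq
      have h1 : Term.realize b pq.1 = Term.realize b pq.2 := hb pq hpq
      have e1 : Term.realize (fun x => e.toFun (b x) i) pq.1 =
          e.toFun (Term.realize b pq.1) i :=
        (pi_realize_aux (e.toFun ∘ b) pq.1 i).symm.trans (congrFun (herm b pq.1) i)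
      have e2 : Term.realize (fun x => e.toFun (b x) i) pq.2 =
          e.toFun (Term.realize b pq.2) i :=
        (pi_realize_aux (e.toFun ∘ b) pq.2 i).symm.trans (congrFun (herm b pq.2) i)
      show Term.realize (fun x => e.toFun (b x) i) pq.1 =
        Term.realize (fun x => e.toFun (b x) i) pq.2
      rw [e1, e2, h1]
    apply e.toEmbedding.inj'
    show e.toFun (Term.realize b p) = e.toFun (Term.realize b q)
    funext i
    have kp : e.toFun (Term.realize b p) i = Term.realize (fun x => e.toFun (b x) i) p :=
      (congrFun (herm b p) i).symm.trans (pi_realize_aux (e.toFun ∘ b) p i)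
    have kq : e.toFun (Term.realize b q) i = Term.realize (fun x => e.toFun (b x) i) q :=
      (congrFun (herm b q) i).symm.trans (pi_realize_aux (e.toFun ∘ b) q i)
    rw [kp, kq]
    exact hcoord i
  tfae_have 4 → 3 := by
    intro h4
    apply Set.eq_of_subset_of_subset
    · rintro ⟨a, b⟩ hab
      by_contra hne
      obtain ⟨B, iB, hB, h, hsep⟩ := h4 a b hne
      have hmem : mapKer h.toFun ∈ SpecK K A := ⟨B, iB, hB, h, rfl⟩
      exact hsep (hab _ hmem)
    · rintro ⟨a, b⟩ hab θ hθmem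
      obtain ⟨B, iB, hB, h, rfl⟩ := hθmem
      show h.toFun a = h.toFun b
      rw [show a = b from hab]
  tfae_have 3 → 4 := by
    intro h3 a b hab
    have : (a, b) ∉ ⋂₀ SpecK K A := by
      rw [h3]; exact hab
    simp only [Set.mem_sInter] at this
    push_neg at this
    obtain ⟨θ, hθmem, hnot⟩ := this
    obtain ⟨B, iB, hB, h, rfl⟩ := hθmem
    exact ⟨B, iB, hB, h, hnot⟩
  tfae_finish
end

section
/- Let K be an equationally Noetherian class of L-structures. Then an L-structure A satisfies every quasi-identity that holds in all members of K if and only if every finitely generated substructure of A embeds into a direct product of a family of members of K. -/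
open FirstOrder FirstOrder.Language Topology

universe u v w x y

section Aux

variable {L : FirstOrder.Language.{v, w}} [L.IsAlgebraic]

/-- Projecting a term realization in the product structure to a coordinate. -/
theorem realize_pi_apply {ι : Type*} {B : ι → Type*} [iB : ∀ i, L.Structure (B i)]
    {α : Type x} (t : L.Term α) (v : α → ∀ j, B j) (i : ι) :
    (Term.realize (M := ∀ j, B j) v t) i = Term.realize (fun x => v x i) t := by
  induction t with
  | var => rfl
  | func f ts ih =>
    show Structure.funMap (M := ∀ j, B j) f (fun j => Term.realize v (ts j)) i = _
    show Structure.funMap f (fun j => Term.realize v (ts j) i) = _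
    simp only [Term.realize, ih]

end Aux

/-- for an equationally Noetherian class `K`, a structure `A`
satisfies all quasi-identities of `K` iff every finitely generated substructure of `A`
embeds into a direct product of a family of members of `K`. -/
theorem statement16 {L : FirstOrder.Language.{v, w}} [L.IsAlgebraic]
    (K : ∀ B : Type u, L.Structure B → Prop) (hK : EqNoetherian K)
    (A : Type u) [iA : L.Structure A] :
    (∀ (n : ℕ) (T₀ : Set (L.Term (Fin n) × L.Term (Fin n))), T₀.Finite →
        ∀ p q : L.Term (Fin n),
          (∀ (B : Type u) (iB : L.Structure B), K B iB → QuasiIdHoldsIn B iB T₀ p q) →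
            QuasiIdHoldsIn A iA T₀ p q) ↔
      ∀ S : L.Substructure A, S.FG → EmbedsInProduct K S := by
  constructor
  · -- forward direction
    intro hA S hS
    obtain ⟨s, hs⟩ := hS
    set n : ℕ := s.card with hn
    -- an enumeration of the generators
    set a : Fin n → A := fun i => ((s.equivFin.symm i : (s : Set A)) : A) with ha
    have hrange : Set.range a = (s : Set A) := by
      rw [ha, ← Function.comp_def, Set.range_comp, Equiv.range_eq_univ, Set.image_univ,
        Subtype.range_coe]
    have hSa : Substructure.closure L (Set.range a) = S := by rw [hrange, hs]
    -- every element of S is realized by a term over `Fin n`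
    have hterm : ∀ z : S, ∃ t : L.Term (Fin n), Term.realize a t = (z : A) := by
      intro z
      have hz : (z : A) ∈ Substructure.closure L (Set.range a) := by
        rw [hSa]; exact z.2
      obtain ⟨t, ht⟩ := Substructure.mem_closure_iff_exists_term.1 hz
      refine ⟨t.relabel fun y => Classical.choose y.2, ?_⟩
      rw [Term.realize_relabel, ← ht]
      congr 1
      funext y
      exact Classical.choose_spec y.2
    choose tm htm using hterm
    -- the set of equations holding at `a`
    set T : Set (L.Term (Fin n) × L.Term (Fin n)) :=
      {pq | Term.realize a pq.1 = Term.realize a pq.2} with hT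
    obtain ⟨T₀, hT₀T, hT₀fin, hNoeth⟩ := hK n T
    have haT₀ : ∀ pq ∈ T₀, EqHolds iA a pq := fun pq h => hT₀T h
    -- separation of distinct elements of S by members of K
    have key : ∀ z w : S, z ≠ w → ∃ (B : Type u) (iB : L.Structure B), K B iB ∧
        ∃ b : Fin n → B, (∀ pq ∈ T, EqHolds iB b pq) ∧
          evalAt iB b (tm z) ≠ evalAt iB b (tm w) := by
      intro z w hzw
      by_contra hcon
      push_neg at hcon
      have hq : ∀ (B : Type u) (iB : L.Structure B), K B iB →
          QuasiIdHoldsIn B iB T₀ (tm z) (tm w) := by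
        intro B iB hKB b hb
        exact hcon B iB hKB b (hNoeth B iB hKB b hb)
      have := hA n T₀ hT₀fin (tm z) (tm w) hq a haT₀
      refine hzw (Subtype.ext ?_)
      rw [← htm z, ← htm w]
      exact this
    set ι : Type u := {c : S × S // c.1 ≠ c.2} with hι
    choose B iB hKB b hb hne using fun i : ι => key i.1.1 i.1.2 i.2
    letI : ∀ i, L.Structure (B i) := iB
    -- the homomorphism into the product
    have hmapfun : ∀ (i : ι) {m : ℕ} (f : L.Functions m) (y : Fin m → S),
        Term.realize (b i) (tm (Structure.funMap f y)) =
          Structure.funMap f (fun j => Term.realize (b i) (tm (y j))) := by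
      intro i m f y
      have hmem : (tm (Structure.funMap f y), Term.func f fun j => tm (y j)) ∈ T := by
        show Term.realize a _ = Term.realize a _
        rw [htm]
        show ((Structure.funMap f y : S) : A) =
          Structure.funMap f fun j => Term.realize a (tm (y j))
        simp only [htm]
        rfl
      have := hb i _ hmem
      exact this
    let H : @Language.Hom L S (∀ i, B i) _ (@piStructure L _ ι B iB) :=
      { toFun := fun z i => Term.realize (b i) (tm z)
        map_fun' := by
          intro m f y
          funext i
          exact hmapfun i f y
        map_rel' := fun r _ => isEmptyElim r }
    have hinj : Function.Injective H.toFun := by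
      intro z w hzw
      by_contra hne'
      have := hne ⟨(z, w), hne'⟩
      exact this (congrFun hzw ⟨(z, w), hne'⟩)
    exact ⟨ι, B, iB, hKB, ⟨@Embedding.ofInjective L S (∀ i, B i) _ _ _ H hinj⟩⟩
  · -- backward direction
    intro hEmb n T₀ hfin p q hq b hb
    set S : L.Substructure A := Substructure.closure L (Set.range b) with hSdef
    obtain ⟨ι, B, iB, hKB, ⟨emb⟩⟩ := hEmb S (Substructure.fg_closure (Set.finite_range b))
    letI : ∀ i, L.Structure (B i) := iB
    set b' : Fin n → S := fun i =>
      ⟨b i, Substructure.subset_closure (Set.mem_range_self i)⟩ with hb'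
    have hcoe : ∀ t : L.Term (Fin n), ((Term.realize b' t : S) : A) = Term.realize b t := by
      intro t
      have h1 := HomClass.realize_term (L := L) S.subtype (t := t) (v := b')
      calc ((Term.realize b' t : S) : A) = S.subtype (Term.realize b' t) := rfl
        _ = Term.realize (⇑S.subtype ∘ b') t := h1.symm
        _ = Term.realize b t := by congr 1
    -- coordinate assignments
    set c : ∀ i : ι, Fin n → B i := fun i j => emb (b' j) i with hc
    have hcr : ∀ (i : ι) (t : L.Term (Fin n)),
        Term.realize (c i) t = emb (Term.realize b' t) i := by
      intro i t
      have h1 : Term.realize (fun j => emb (b' j)) t = emb (Term.realize b' t) :=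
        HomClass.realize_term (L := L) emb (t := t) (v := b')
      have h2 := realize_pi_apply (L := L) t (fun j => emb (b' j)) i
      rw [h1] at h2
      exact h2.symm
    have hbS : ∀ pq ∈ T₀, EqHolds (show L.Structure ↥S from inferInstance) b' pq := by
      intro pq hpq
      have h := hb pq hpq
      have : ((Term.realize b' pq.1 : S) : A) = ((Term.realize b' pq.2 : S) : A) := by
        rw [hcoe, hcoe]; exact h
      exact Subtype.ext_iff.2 this
    have hco : ∀ i : ι, Term.realize (c i) p = Term.realize (c i) q := by
      intro i
      refine hq (B i) (iB i) (hKB i) (c i) ?_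
      intro pq hpq
      show Term.realize (c i) pq.1 = Term.realize (c i) pq.2
      rw [hcr, hcr]
      have := hbS pq hpq
      exact congrArg (fun z => emb z i) this
    have : Term.realize b' p = Term.realize b' q := by
      apply emb.injective
      funext i
      have h1 := hcr i p
      have h2 := hcr i q
      rw [← h1, ← h2]
      exact hco i
    show Term.realize b p = Term.realize b q
    rw [← hcoe p, ← hcoe q]
    exact congrArg _ this
end

section
/- Let X be a topological space and 𝒮 a family of closed subsets of X such that every closed set of X is an intersection of finite unions of members of 𝒮 (a prebasis of closed sets). Then a subset Y ⊆ X is irreducible if and only if Y is nonempty and, whenever Y ⊆ A₁ ∪ … ∪ Aₙ with each A_i ∈ 𝒮 and n ≥ 1, there is some k with Y ⊆ A_k. -/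
universe u

/-- if `𝒮` is a prebasis of closed sets for a topological space `X`,
then `Y ⊆ X` is irreducible iff `Y` is nonempty and any cover of `Y` by finitely many
(at least one) members of `𝒮` contains a member covering `Y`. -/
theorem statement17 {X : Type u} [TopologicalSpace X] (𝒮 : Set (Set X))
    (hcl : ∀ C ∈ 𝒮, IsClosed C)
    (hgen : ∀ C : Set X, IsClosed C → ∃ 𝒯 : Set (Set X),
        (∀ F ∈ 𝒯, ∃ G : Finset (Set X), ↑G ⊆ 𝒮 ∧ F = ⋃₀ ↑G) ∧ C = ⋂₀ 𝒯)
    (Y : Set X) :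
    IsIrreducible Y ↔
      Y.Nonempty ∧ ∀ n : ℕ, 1 ≤ n → ∀ A : Fin n → Set X, (∀ i, A i ∈ 𝒮) →
        Y ⊆ ⋃ i, A i → ∃ k, Y ⊆ A k := by
  classical
  constructor
  · intro h
    refine ⟨h.nonempty, fun n hn A hA hcov => ?_⟩
    have := isIrreducible_iff_sUnion_isClosed.mp h (Finset.univ.image A)
      (by
        intro z hz
        simp only [Finset.mem_image] at hz
        obtain ⟨i, _, rfl⟩ := hz
        exact hcl _ (hA i))
      (by
        rw [Finset.coe_image, Set.sUnion_image, Finset.coe_univ]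
        simpa using hcov)
    obtain ⟨z, hz, hYz⟩ := this
    simp only [Finset.mem_image] at hz
    obtain ⟨i, _, rfl⟩ := hz
    exact ⟨i, hYz⟩
  · rintro ⟨hne, hcov⟩
    refine ⟨hne, ?_⟩
    rw [isPreirreducible_iff_isClosed_union_isClosed]
    intro z₁ z₂ hz₁ hz₂ hsub
    by_contra hcon
    push_neg at hcon
    obtain ⟨hn1, hn2⟩ := hcon
    obtain ⟨y₁, hy₁Y, hy₁⟩ := Set.not_subset.mp hn1
    obtain ⟨y₂, hy₂Y, hy₂⟩ := Set.not_subset.mp hn2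
    obtain ⟨𝒯₁, h𝒯₁, hz₁eq⟩ := hgen z₁ hz₁
    obtain ⟨𝒯₂, h𝒯₂, hz₂eq⟩ := hgen z₂ hz₂
    -- find F₁ ∈ 𝒯₁ with y₁ ∉ F₁
    have hy₁' : y₁ ∉ ⋂₀ 𝒯₁ := hz₁eq ▸ hy₁
    have hy₂' : y₂ ∉ ⋂₀ 𝒯₂ := hz₂eq ▸ hy₂
    obtain ⟨F₁, hF₁mem, hy₁F₁⟩ : ∃ F ∈ 𝒯₁, y₁ ∉ F := by
      by_contra hc; push_neg at hc; exact hy₁' (fun F hF => hc F hF)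
    obtain ⟨F₂, hF₂mem, hy₂F₂⟩ : ∃ F ∈ 𝒯₂, y₂ ∉ F := by
      by_contra hc; push_neg at hc; exact hy₂' (fun F hF => hc F hF)
    obtain ⟨G₁, hG₁S, hF₁eq⟩ := h𝒯₁ F₁ hF₁mem
    obtain ⟨G₂, hG₂S, hF₂eq⟩ := h𝒯₂ F₂ hF₂mem
    -- Y ⊆ F₁ ∪ F₂
    have hYF : Y ⊆ F₁ ∪ F₂ := by
      intro y hy
      rcases hsub hy with h | h
      · exact Or.inl (by rw [hz₁eq] at h; exact h F₁ hF₁mem)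
      · exact Or.inr (by rw [hz₂eq] at h; exact h F₂ hF₂mem)
    set G : Finset (Set X) := G₁ ∪ G₂ with hG
    have hGS : ↑G ⊆ 𝒮 := by
      rw [hG, Finset.coe_union]; exact Set.union_subset hG₁S hG₂S
    have hYG : Y ⊆ ⋃₀ ↑G := by
      intro y hy
      rcases hYF hy with h | h
      · rw [hF₁eq] at h
        obtain ⟨s, hs, hys⟩ := h
        exact ⟨s, by simp [hG, hs], hys⟩
      · rw [hF₂eq] at h
        obtain ⟨s, hs, hys⟩ := h
        exact ⟨s, by simp [hG, hs], hys⟩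
    have hGne : G.Nonempty := by
      obtain ⟨y, hy⟩ := hne
      obtain ⟨s, hs, _⟩ := hYG hy
      exact ⟨s, by exact_mod_cast hs⟩
    -- index by Fin G.card
    have hn : 1 ≤ G.card := Finset.card_pos.mpr hGne
    let A : Fin G.card → Set X := fun i => (G.equivFin.symm i : Set X)
    have hA : ∀ i, A i ∈ 𝒮 := fun i => hGS (G.equivFin.symm i).2
    have hYA : Y ⊆ ⋃ i, A i := by
      intro y hy
      obtain ⟨s, hs, hys⟩ := hYG hy
      have hs' : s ∈ G := hs
      exact Set.mem_iUnion.mpr ⟨G.equivFin ⟨s, hs'⟩, by simp [A, hys]⟩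
    obtain ⟨k, hk⟩ := hcov G.card hn A hA hYA
    have hkG : A k ∈ G := (G.equivFin.symm k).2
    rcases Finset.mem_union.mp hkG with h | h
    · have : Y ⊆ F₁ := by
        rw [hF₁eq]
        exact hk.trans (Set.subset_sUnion_of_mem (by exact_mod_cast h))
      exact hy₁F₁ (this hy₁Y)
    · have : Y ⊆ F₂ := by
        rw [hF₂eq]
        exact hk.trans (Set.subset_sUnion_of_mem (by exact_mod_cast h))
      exact hy₂F₂ (this hy₂Y)
end

section
/- The following are equivalent for an L-structure A: (1) A is K-reduced and Spec_K(A) with the Zariski topology is an irreducible topological space; (2) for every finite family of pairs (a₁,b₁),…,(aₙ,bₙ) of elements of A with aᵢ ≠ bᵢ, the intersection ⋂ᵢ D(aᵢ,bᵢ) of the distinguished open sets D(a,b) = {θ ∈ Spec_K(A) : (a,b) ∉ θ} is nonempty; (3) A is n-separated by K for every n; (4) A is discriminated by K. -/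
open FirstOrder FirstOrder.Language Topology

universe u v w x y

/-!
Each condition says that finitely many off-diagonal pairs can always be kept apart
simultaneously by one member of the `K`-spectrum, i.e. by one homomorphism into a member of
`K`; for discrimination, take all pairs of distinct elements of a finite set. On the
topological side, the sets `D(a, b)` are open and their finite intersections form a basis of
the Zariski topology. So irreducibility (any two nonempty opens meet) amounts to the
nonemptiness of finite intersections of nonempty sets `D(aᵢ, bᵢ)`, and `K`-reducedness says
that `D(a, b)` is nonempty whenever `a ≠ b`.
-/

open Set

theorem IrreducibleSpace.nonempty_iInter_of_isOpen {X : Type*} [TopologicalSpace X]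
    [IrreducibleSpace X] {ι : Sort*} [Finite ι] {s : ι → Set X} (ho : ∀ i, IsOpen (s i))
    (hne : ∀ i, (s i).Nonempty) : (⋂ i, s i).Nonempty := by
  rw [← sInter_range]
  exact ((finite_range s).dense_sInter (forall_mem_range.2 ho)
    (forall_mem_range.2 fun i => (ho i).dense (hne i))).nonempty

section Separation

variable {L : FirstOrder.Language.{v, w}} {K : ∀ B : Type u, L.Structure B → Prop}
  {A : Type*} [L.Structure A]

theorem NSeparatedBy.exists_hom_of_finite (h3 : NSeparatedBy K A) {ι : Type*} [Finite ι]
    {a b : ι → A} (hab : ∀ i, a i ≠ b i) :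
    ∃ (B : Type u) (iB : L.Structure B), K B iB ∧
      ∃ h : @Language.Hom L A B _ iB, ∀ i, h.toFun (a i) ≠ h.toFun (b i) := by
  obtain ⟨n, ⟨e⟩⟩ := Finite.exists_equiv_fin ι
  obtain ⟨B, iB, hB, h, hh⟩ := h3 n (a ∘ e.symm) (b ∘ e.symm) fun i => hab _
  exact ⟨B, iB, hB, h, fun i => by simpa using hh (e i)⟩

theorem NSeparatedBy.discriminatedBy (h3 : NSeparatedBy K A) : DiscriminatedBy K A := by
  intro W hW
  have := hW.to_subtype
  obtain ⟨B, iB, hB, h, hh⟩ := h3.exists_hom_of_finite (ι := {p : W × W // (p.1 : A) ≠ p.2})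
    (a := fun p => p.1.1) (b := fun p => p.1.2) fun p => p.2
  refine ⟨B, iB, hB, h, fun x hx y hy hxy => ?_⟩
  by_contra hne
  exact hh ⟨(⟨x, hx⟩, ⟨y, hy⟩), hne⟩ hxy

theorem DiscriminatedBy.nSeparatedBy (h4 : DiscriminatedBy K A) : NSeparatedBy K A := by
  intro n a b hab
  obtain ⟨B, iB, hB, h, hinj⟩ :=
    h4 (range a ∪ range b) ((finite_range a).union (finite_range b))
  exact ⟨B, iB, hB, h, fun i hi => hab i (hinj (.inl ⟨i, rfl⟩) (.inr ⟨i, rfl⟩) hi)⟩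

end Separation

namespace SpecK

variable {L : FirstOrder.Language.{v, w}} {K : ∀ B : Type u, L.Structure B → Prop}
  {A : Type*} [L.Structure A]

variable (K) in
/-- The distinguished open set `D(a, b)` for `p = (a, b)`. -/
def basicOpen (p : A × A) : Set {θ // θ ∈ SpecK K A} :=
  {θ | p ∉ θ.1}

theorem diagCong_subset {θ : Set (A × A)} (hθ : θ ∈ SpecK K A) : diagCong A ⊆ θ := by
  obtain ⟨B, iB, -, h, rfl⟩ := hθ
  exact fun p hp => congrArg h.toFun hp

theorem ne_of_mem_basicOpen {p : A × A} {ξ : {θ // θ ∈ SpecK K A}}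
    (hξ : ξ ∈ basicOpen K p) : p.1 ≠ p.2 :=
  fun hp => hξ (diagCong_subset ξ.2 hp)

theorem nonempty_iInter_basicOpen_iff {ι : Sort*} (a b : ι → A) :
    (⋂ i, basicOpen K (a i, b i)).Nonempty ↔
      ∃ (B : Type u) (iB : L.Structure B), K B iB ∧
        ∃ h : @Language.Hom L A B _ iB, ∀ i, h.toFun (a i) ≠ h.toFun (b i) := by
  constructor
  · rintro ⟨⟨_, B, iB, hB, h, rfl⟩, hξ⟩
    exact ⟨B, iB, hB, h, mem_iInter.1 hξ⟩
  · rintro ⟨B, iB, hB, h, hh⟩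
    exact ⟨⟨mapKer h.toFun, B, iB, hB, h, rfl⟩, mem_iInter.2 hh⟩

theorem _root_.NSeparatedBy.nonempty_biInter_basicOpen (h3 : NSeparatedBy K A)
    (P : Finset (A × A)) (hP : ∀ p ∈ P, p.1 ≠ p.2) :
    (⋂ p ∈ P, basicOpen K p).Nonempty := by
  change (⋂ p ∈ (P : Set (A × A)), basicOpen K p).Nonempty
  rw [biInter_eq_iInter]
  exact (nonempty_iInter_basicOpen_iff _ _).2
    (h3.exists_hom_of_finite fun p : (P : Set (A × A)) => hP p p.2)

theorem basicOpen_nonempty (hred : IsKReduced K A) {p : A × A} (hp : p.1 ≠ p.2) :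
    (basicOpen K p).Nonempty := by
  have hp' : p ∉ ⋂₀ SpecK K A := by rw [hred]; exact hp
  obtain ⟨θ, hθ, hpθ⟩ := by simpa only [mem_sInter, not_forall, exists_prop] using hp'
  exact ⟨⟨θ, hθ⟩, hpθ⟩

theorem _root_.NSeparatedBy.isKReduced (h3 : NSeparatedBy K A) : IsKReduced K A := by
  refine Subset.antisymm (fun p hp => ?_) fun p hp θ hθ => diagCong_subset hθ hp
  by_contra hne
  obtain ⟨ξ, hξ⟩ := h3.nonempty_biInter_basicOpen {p} (by simpa [diagCong] using hne)
  exact (by simpa using hξ : ξ ∈ basicOpen K p) (hp ξ.1 ξ.2)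

attribute [local instance] zariskiTopology

theorem isOpen_basicOpen (p : A × A) : IsOpen (basicOpen K p) := by
  have : basicOpen K p = (VZar K A {p})ᶜ := by ext; simp [basicOpen, VZar]
  rw [this]
  exact TopologicalSpace.isOpen_generateFrom_of_mem ⟨{p}, rfl⟩

theorem exists_biInter_basicOpen_subset_of_isOpen {U : Set {θ // θ ∈ SpecK K A}} (hU : IsOpen U)
    {ξ : {θ // θ ∈ SpecK K A}} (hξ : ξ ∈ U) :
    ∃ P : Finset (A × A),
      ξ ∈ ⋂ p ∈ P, basicOpen K p ∧ ⋂ p ∈ P, basicOpen K p ⊆ U := by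
  classical
  induction hU generalizing ξ with
  | basic U hU =>
    obtain ⟨S, rfl⟩ := hU
    obtain ⟨p, hpS, hpξ⟩ := not_subset.1 hξ
    refine ⟨{p}, by simpa [basicOpen] using hpξ, fun η hη hSη => ?_⟩
    exact (by simpa [basicOpen] using hη : p ∉ η.1) (hSη hpS)
  | univ => exact ⟨∅, by simp, subset_univ _⟩
  | inter U V _ _ ihU ihV =>
    obtain ⟨P, hξP, hPU⟩ := ihU hξ.1
    obtain ⟨Q, hξQ, hQV⟩ := ihV hξ.2
    refine ⟨P ∪ Q, ?_, ?_⟩ <;> rw [Finset.set_biInter_inter]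
    exacts [⟨hξP, hξQ⟩, inter_subset_inter hPU hQV]
  | sUnion F _ ih =>
    obtain ⟨U, hUF, hξU⟩ := hξ
    obtain ⟨P, hξP, hPU⟩ := ih U hUF hξU
    exact ⟨P, hξP, hPU.trans (subset_sUnion_of_mem hUF)⟩

theorem _root_.NSeparatedBy.preirreducibleSpace (h3 : NSeparatedBy K A) :
    PreirreducibleSpace {θ // θ ∈ SpecK K A} := by
  classical
  refine .of_forall_nonempty_inter fun U V hU hV ⟨ξ, hξU⟩ ⟨η, hηV⟩ => ?_
  obtain ⟨P, hξP, hPU⟩ := exists_biInter_basicOpen_subset_of_isOpen hU hξU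
  obtain ⟨Q, hηQ, hQV⟩ := exists_biInter_basicOpen_subset_of_isOpen hV hηV
  refine (h3.nonempty_biInter_basicOpen (P ∪ Q) fun p hp => ?_).mono ?_
  · rcases Finset.mem_union.1 hp with hp | hp
    exacts [ne_of_mem_basicOpen (mem_iInter₂.1 hξP p hp),
      ne_of_mem_basicOpen (mem_iInter₂.1 hηQ p hp)]
  · rw [Finset.set_biInter_inter]
    exact inter_subset_inter hPU hQV

theorem _root_.NSeparatedBy.irreducibleSpace (h3 : NSeparatedBy K A) :
    IrreducibleSpace {θ // θ ∈ SpecK K A} :=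
  have := h3.preirreducibleSpace
  { toNonempty := (h3.nonempty_biInter_basicOpen ∅ (by simp)).to_type }

theorem nonempty_iInter_basicOpen [IrreducibleSpace {θ // θ ∈ SpecK K A}]
    (hred : IsKReduced K A) {ι : Sort*} [Finite ι] {a b : ι → A} (hab : ∀ i, a i ≠ b i) :
    (⋂ i, basicOpen K (a i, b i)).Nonempty :=
  IrreducibleSpace.nonempty_iInter_of_isOpen (fun _ => isOpen_basicOpen _)
    fun i => basicOpen_nonempty hred (hab i)

end SpecK

/-- the following are equivalent: `A` is `K`-reduced with irreducible
`K`-spectrum; all finite intersections of distinguished open sets `D(aᵢ, bᵢ)` (with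
`aᵢ ≠ bᵢ`) are nonempty; `A` is `n`-separated by `K` for every `n`; `A` is discriminated
by `K`. -/
theorem statement19 {L : FirstOrder.Language.{v, w}}
    (K : ∀ B : Type u, L.Structure B → Prop) (A : Type u) [L.Structure A] :
    [IsKReduced K A ∧ @IrreducibleSpace {θ // θ ∈ SpecK K A} (zariskiTopology K A),
      ∀ (n : ℕ) (a b : Fin n → A), (∀ i, a i ≠ b i) →
        (⋂ i, {θ : {θ // θ ∈ SpecK K A} | (a i, b i) ∉ θ.1}).Nonempty,
      NSeparatedBy K A,
      DiscriminatedBy K A].TFAE := by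
  tfae_have 1 → 2 := fun ⟨hred, _⟩ _ _ _ => SpecK.nonempty_iInter_basicOpen hred
  tfae_have 2 ↔ 3 := forall_congr' fun _ => forall_congr' fun a => forall_congr' fun b =>
    imp_congr_right fun _ => SpecK.nonempty_iInter_basicOpen_iff a b
  tfae_have 3 → 1 := fun h3 => ⟨h3.isKReduced, h3.irreducibleSpace⟩
  tfae_have 3 ↔ 4 := ⟨NSeparatedBy.discriminatedBy, DiscriminatedBy.nSeparatedBy⟩
  tfae_finish
end
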